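/- arXiv:1705.04507 — 6 statements merged into one kernel-verified Lean document; each statement's English description precedes it below -/
import Mathlib

section
/- If f is a bent Boolean function on F_2^{2m} with m ≥ 1, then the weight of f equals 2^{2m-1} - 2^{m-1} or 2^{2m-1} + 2^{m-1}. -/
open Finset

/-- Inner product on `F_2^n`. -/
def dotp {n : ℕ} (x y : Fin n → ZMod 2) : ZMod 2 := ∑ i, x i * y i

/-- Hamming weight of a Boolean function: the cardinality of its support. -/
def wt {n : ℕ} (f : (Fin n → ZMod 2) → ZMod 2) : ℕ :=
  (Finset.univ.filter fun x => f x = 1).card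

/-- Walsh–Hadamard transform of a Boolean function. -/
def walsh {n : ℕ} (f : (Fin n → ZMod 2) → ZMod 2) (x : Fin n → ZMod 2) : ℤ :=
  ∑ y : Fin n → ZMod 2, (-1 : ℤ) ^ (f y + dotp x y).val

/-- A Boolean function on `F_2^(2m)` is bent if its Walsh–Hadamard transform has constant
absolute value `2^m`. -/
def IsBent {m : ℕ} (f : (Fin (2 * m) → ZMod 2) → ZMod 2) : Prop :=
  ∀ x, |walsh f x| = 2 ^ m

/-- The dual of a bent function: `f̂ x = 0` if `W_f x = 2^m`, and `1` otherwise
(for bent `f` the other case is exactly `W_f x = -2^m`). -/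
def dual {m : ℕ} (f : (Fin (2 * m) → ZMod 2) → ZMod 2) :
    (Fin (2 * m) → ZMod 2) → ZMod 2 :=
  fun x => if walsh f x = 2 ^ m then 0 else 1

/-- The weight class of a bent function on `F_2^(2m)`:
`0` if its weight is `2^(2m-1) - 2^(m-1)`, and `1` otherwise. -/
def wc {m : ℕ} (f : (Fin (2 * m) → ZMod 2) → ZMod 2) : ZMod 2 :=
  if wt f = 2 ^ (2 * m - 1) - 2 ^ (m - 1) then 0 else 1

/-- The Cayley graph of a Boolean function: distinct `x`, `y` are adjacent iff `f (x+y) = 1`. -/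
def cayley {n : ℕ} (f : (Fin n → ZMod 2) → ZMod 2) : SimpleGraph (Fin n → ZMod 2) where
  Adj x y := x ≠ y ∧ f (x + y) = 1
  symm := ⟨fun x y h => ⟨h.1.symm, by rw [add_comm]; exact h.2⟩⟩
  loopless := ⟨fun x h => h.1 rfl⟩

instance cayleyAdjDecidable {n : ℕ} (f : (Fin n → ZMod 2) → ZMod 2) :
    DecidableRel (cayley f).Adj :=
  fun x y => inferInstanceAs (Decidable (x ≠ y ∧ f (x + y) = 1))

/-! A Walsh coefficient at `0` counts zeros minus ones of `f`, so `W_f(0) = 2^(2m) - 2 wt(f)`.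
For bent `f` this equals `± 2^m`, and halving gives `wt(f) = 2^(2m-1) ∓ 2^(m-1)`. -/

lemma neg_one_pow_val_zmod_two (z : ZMod 2) :
    (-1 : ℤ) ^ z.val = 1 - 2 * if z = 1 then 1 else 0 := by
  fin_cases z <;> rfl

@[simp]
lemma dotp_zero_left {n : ℕ} (y : Fin n → ZMod 2) : dotp 0 y = 0 := by
  simp [dotp]

lemma walsh_zero {n : ℕ} (f : (Fin n → ZMod 2) → ZMod 2) :
    walsh f 0 = 2 ^ n - 2 * (wt f : ℤ) := by
  simp_rw [walsh, dotp_zero_left, add_zero, neg_one_pow_val_zmod_two]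
  rw [sum_sub_distrib, sum_const, ← mul_sum, sum_boole]
  simp [wt, card_univ]

lemma eq_sub_or_eq_add_of_abs_two_mul_sub {p q w : ℕ} (hpq : p ≤ q)
    (h : |2 * (q : ℤ) - 2 * w| = 2 * p) : w = q - p ∨ w = q + p := by
  rcases abs_eq (by positivity) |>.mp h with h | h <;> [left; right] <;> omega

lemma two_pow_eq_two_mul_two_pow_pred {n : ℕ} (hn : 0 < n) :
    (2 : ℤ) ^ n = 2 * ↑(2 ^ (n - 1) : ℕ) := by
  push_cast
  rw [← pow_succ', Nat.sub_add_cancel hn]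

/-- a bent function on `F_2^(2m)` (`m ≥ 1`) has weight
`2^(2m-1) - 2^(m-1)` or `2^(2m-1) + 2^(m-1)`. -/
theorem bent_weight {m : ℕ} (hm : 1 ≤ m) (f : (Fin (2 * m) → ZMod 2) → ZMod 2)
    (hf : IsBent f) :
    wt f = 2 ^ (2 * m - 1) - 2 ^ (m - 1) ∨ wt f = 2 ^ (2 * m - 1) + 2 ^ (m - 1) := by
  have h := hf 0
  rw [walsh_zero, two_pow_eq_two_mul_two_pow_pred (n := 2 * m) (by omega),
    two_pow_eq_two_mul_two_pow_pred hm] at h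
  exact eq_sub_or_eq_add_of_abs_two_mul_sub (Nat.pow_le_pow_right two_pos (by omega)) h
end

section
/- Let f be a bent Boolean function on F_2^{2m} with m ≥ 1 and f(0) = 0. Then the Cayley graph Cay(f) is strongly regular with parameters (4^m, 2^{2m-1} - 2^{m-1}, 2^{2m-2} - 2^{m-1}, 2^{2m-2} - 2^{m-1}) if wt(f) = 2^{2m-1} - 2^{m-1}, and strongly regular with parameters (4^m, 2^{2m-1} + 2^{m-1}, 2^{2m-2} + 2^{m-1}, 2^{2m-2} + 2^{m-1}) if wt(f) = 2^{2m-1} + 2^{m-1}. In particular λ = μ in both cases. -/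
/-!
Bentness says that `W_f ^ 2` is the constant `2 ^ (2m)`. Since `∑ₓ W_f(x)² (-1)^⟨d,x⟩` is `2 ^ (2m)`
times the autocorrelation `∑ᵤ (-1)^(f u + f (u + d))`, the autocorrelation vanishes at every `d ≠ 0`.
Writing `(-1)^a = 1 - 2a`, it equals `4^m - 4 wt f + 4 N(d)`, where `N(d)` counts the `u` with
`f u = f (u + d) = 1`; and `N(x + y)` is the number of common neighbours of `x` and `y` in `Cay(f)`.
So any two distinct vertices, adjacent or not, have `wt f - 4^(m-1)` common neighbours.
-/

open Finset

def signChar : AddChar (ZMod 2) ℤ where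
  toFun a := (-1) ^ a.val
  map_zero_eq_one' := rfl
  map_add_eq_mul' := by decide

theorem signChar_eq_one_iff : ∀ a : ZMod 2, signChar a = 1 ↔ a = 0 := by decide

theorem signChar_eq_one_sub : ∀ a : ZMod 2, signChar a = 1 - 2 * if a = 1 then 1 else 0 := by
  decide

section Fourier

variable {n : ℕ}

theorem walsh_eq_sum_signChar (f : (Fin n → ZMod 2) → ZMod 2) (x : Fin n → ZMod 2) :
    walsh f x = ∑ y, signChar (f y + dotp x y) := rfl

theorem dotp_eq_dotProduct (x y : Fin n → ZMod 2) : dotp x y = x ⬝ᵥ y := rfl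

def dotpChar (d : Fin n → ZMod 2) : AddChar (Fin n → ZMod 2) ℤ :=
  signChar.compAddMonoidHom (AddMonoidHom.mk' (dotp d) (dotProduct_add d))

theorem dotpChar_apply (d x : Fin n → ZMod 2) : dotpChar d x = signChar (dotp d x) :=
  rfl

theorem dotpChar_eq_zero_iff (d : Fin n → ZMod 2) : dotpChar d = 0 ↔ d = 0 := by
  simp only [AddChar.eq_zero_iff, dotpChar_apply, signChar_eq_one_iff, dotp_eq_dotProduct]
  refine ⟨fun h => funext fun i => ?_, fun h x => by simp [h]⟩
  simpa using h (Pi.single i 1)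

theorem sum_signChar_dotp (d : Fin n → ZMod 2) :
    ∑ x, signChar (dotp d x) = if d = 0 then 2 ^ n else 0 := by
  simpa [dotpChar_apply, dotpChar_eq_zero_iff] using (dotpChar d).sum_eq_ite

def autocorrelation (f : (Fin n → ZMod 2) → ZMod 2) (d : Fin n → ZMod 2) : ℤ :=
  ∑ u, signChar (f u + f (u + d))

theorem sum_walsh_sq_mul_signChar (f : (Fin n → ZMod 2) → ZMod 2) (d : Fin n → ZMod 2) :
    ∑ x, walsh f x ^ 2 * signChar (dotp d x) = 2 ^ n * autocorrelation f d := by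
  calc ∑ x, walsh f x ^ 2 * signChar (dotp d x)
      = ∑ x, ∑ y, ∑ z, signChar (f y + f z) * signChar (dotp (y + z + d) x) := by
        refine sum_congr rfl fun x _ => ?_
        rw [sq, walsh_eq_sum_signChar, sum_mul_sum, sum_mul]
        refine sum_congr rfl fun y _ => ?_
        rw [sum_mul]
        refine sum_congr rfl fun z _ => ?_
        simp only [dotp_eq_dotProduct, add_dotProduct, dotProduct_comm x, AddChar.map_add_eq_mul]
        ring
    _ = ∑ y, ∑ z, signChar (f y + f z) * ∑ x, signChar (dotp (y + z + d) x) := by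
        simp only [mul_sum]
        rw [sum_comm]
        exact sum_congr rfl fun y _ => sum_comm
    _ = 2 ^ n * autocorrelation f d := by
        have hdelta : ∀ y z : Fin n → ZMod 2, y + z + d = 0 ↔ z = y + d := fun y z => by
          rw [add_right_comm, ← ZModModule.sub_eq_add, sub_eq_zero, eq_comm]
        simp [sum_signChar_dotp, hdelta, autocorrelation, mul_sum, mul_comm]

theorem autocorrelation_eq (f : (Fin n → ZMod 2) → ZMod 2) (d : Fin n → ZMod 2) :
    autocorrelation f d = 2 ^ n - 4 * wt f + 4 * #{u | f u = 1 ∧ f (u + d) = 1} := by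
  set A : (Fin n → ZMod 2) → ℤ := fun u => if f u = 1 then 1 else 0
  have hA : ∑ u, A u = wt f := by rw [sum_boole, wt]
  have hA_shift : ∑ u, A (u + d) = wt f := (Equiv.sum_comp (Equiv.addRight d) A).trans hA
  have hA_pair : ∑ u, A u * A (u + d) = #{u | f u = 1 ∧ f (u + d) = 1} := by
    simp only [A, ite_zero_mul_ite_zero, mul_one, sum_boole]
  calc autocorrelation f d = ∑ u, (1 - 2 * A u) * (1 - 2 * A (u + d)) := by
        simp only [autocorrelation, AddChar.map_add_eq_mul, signChar_eq_one_sub, A]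
    _ = ∑ u, (1 - 2 * A u - 2 * A (u + d) + 4 * (A u * A (u + d))) :=
        sum_congr rfl fun u _ => by ring
    _ = _ := by
        rw [sum_add_distrib, sum_sub_distrib, sum_sub_distrib, ← mul_sum, ← mul_sum, ← mul_sum,
          hA, hA_shift, hA_pair, sum_const, card_univ, Fintype.card_fun, ZMod.card,
          Fintype.card_fin]
        ring

end Fourier

theorem IsBent.walsh_sq {m : ℕ} {f : (Fin (2 * m) → ZMod 2) → ZMod 2} (hf : IsBent f)
    (x : Fin (2 * m) → ZMod 2) : walsh f x ^ 2 = 2 ^ (2 * m) := by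
  rw [← sq_abs, hf x, ← pow_mul, mul_comm]

theorem IsBent.autocorrelation_eq_zero {m : ℕ} {f : (Fin (2 * m) → ZMod 2) → ZMod 2}
    (hf : IsBent f) {d : Fin (2 * m) → ZMod 2} (hd : d ≠ 0) : autocorrelation f d = 0 := by
  have h := sum_walsh_sq_mul_signChar f d
  simp only [hf.walsh_sq, ← mul_sum, sum_signChar_dotp, if_neg hd, mul_zero] at h
  exact (mul_eq_zero.mp h.symm).resolve_left (by positivity)

section Cayley

variable {n : ℕ} {f : (Fin n → ZMod 2) → ZMod 2}

theorem cayley_adj_iff (h0 : f 0 = 0) {x y : Fin n → ZMod 2} :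
    (cayley f).Adj x y ↔ f (x + y) = 1 := by
  refine ⟨And.right, fun h => ⟨?_, h⟩⟩
  rintro rfl
  simp [ZModModule.add_self, h0] at h

theorem cayley_degree (h0 : f 0 = 0) (x : Fin n → ZMod 2) : (cayley f).degree x = wt f := by
  rw [← SimpleGraph.card_neighborFinset_eq_degree, SimpleGraph.neighborFinset_eq_filter, wt]
  exact card_equiv (Equiv.addLeft x) fun y => by simp [cayley_adj_iff h0]

theorem card_commonNeighbors_cayley (h0 : f 0 = 0) (x y : Fin n → ZMod 2) :
    Fintype.card ((cayley f).commonNeighbors x y) = #{u | f u = 1 ∧ f (u + (x + y)) = 1} := by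
  rw [← Set.toFinset_card]
  refine card_equiv (Equiv.addLeft x) fun z => ?_
  have hxy : x + z + (x + y) = y + z := by
    rw [add_comm x z, ZModModule.add_add_add_cancel, add_comm]
  simp [SimpleGraph.mem_commonNeighbors, cayley_adj_iff h0, hxy]

end Cayley

theorem IsBent.isSRGWith_cayley {m : ℕ} {f : (Fin (2 * m) → ZMod 2) → ZMod 2} (hf : IsBent f)
    (hm : 1 ≤ m) (h0 : f 0 = 0) :
    (cayley f).IsSRGWith (4 ^ m) (wt f) (wt f - 4 ^ (m - 1)) (wt f - 4 ^ (m - 1)) := by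
  have hcommon : ∀ {x y}, x ≠ y →
      Fintype.card ((cayley f).commonNeighbors x y) = wt f - 4 ^ (m - 1) := by
    intro x y hxy
    have hd : x + y ≠ 0 := by rwa [← ZModModule.sub_eq_add, sub_ne_zero]
    have h := hf.autocorrelation_eq_zero hd
    rw [autocorrelation_eq, ← card_commonNeighbors_cayley h0] at h
    obtain ⟨k, rfl⟩ := Nat.exists_eq_add_of_le' hm
    have h4 : (2 : ℤ) ^ (2 * (k + 1)) = 4 * (4 ^ k : ℕ) := by
      push_cast; rw [pow_mul, pow_succ']; norm_num
    rw [h4] at h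
    rw [Nat.add_sub_cancel]
    omega
  exact ⟨by simp [pow_mul], cayley_degree h0, fun _ _ h => hcommon h.ne,
    fun _ _ hne _ => hcommon hne⟩

/-- the Cayley graph of a bent function on `F_2^(2m)` with `f 0 = 0` is
strongly regular with parameters determined by the weight of `f`; in both cases `λ = μ`. -/
theorem cayley_of_bent_isSRG {m : ℕ} (hm : 1 ≤ m)
    (f : (Fin (2 * m) → ZMod 2) → ZMod 2) (hf : IsBent f) (h0 : f 0 = 0) :
    (wt f = 2 ^ (2 * m - 1) - 2 ^ (m - 1) →
      (cayley f).IsSRGWith (4 ^ m) (2 ^ (2 * m - 1) - 2 ^ (m - 1))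
        (2 ^ (2 * m - 2) - 2 ^ (m - 1)) (2 ^ (2 * m - 2) - 2 ^ (m - 1))) ∧
    (wt f = 2 ^ (2 * m - 1) + 2 ^ (m - 1) →
      (cayley f).IsSRGWith (4 ^ m) (2 ^ (2 * m - 1) + 2 ^ (m - 1))
        (2 ^ (2 * m - 2) + 2 ^ (m - 1)) (2 ^ (2 * m - 2) + 2 ^ (m - 1))) := by
  have hsrg := hf.isSRGWith_cayley hm h0
  obtain ⟨k, rfl⟩ := Nat.exists_eq_add_of_le' hm
  have h1 : 2 ^ (2 * (k + 1) - 1) = 2 * 4 ^ k := by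
    rw [show 2 * (k + 1) - 1 = 2 * k + 1 by omega, pow_succ, pow_mul, mul_comm]; rfl
  have h2 : 2 ^ (2 * (k + 1) - 2) = 4 ^ k := by
    rw [show 2 * (k + 1) - 2 = 2 * k by omega, pow_mul]; rfl
  have hle : 2 ^ k ≤ 4 ^ k := Nat.pow_le_pow_left (by norm_num) k
  simp only [Nat.add_sub_cancel, h1, h2] at hsrg ⊢
  generalize 2 ^ k = A, 4 ^ k = B at *
  constructor <;> intro hw <;> rw [hw] at hsrg
  · rwa [show 2 * B - A - B = B - A by omega] at hsrg
  · rwa [show 2 * B + A - B = B + A by omega] at hsrg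
end

section
/- Let f be a bent Boolean function on F_2^{2m} with m ≥ 1, with dual f̂, and let x ∈ F_2^{2m} with x ≠ 0. Write N(x) for the cardinality of {y ∈ F_2^{2m} | f(y) = 1 and ⟨x,y⟩ = 1} (the weight of the codeword of the linear code C(f) corresponding to x). Then: if wt(f) = 2^{2m-1} - 2^{m-1}, N(x) = 2^{2m-2} when f̂(x) = 0 and N(x) = 2^{2m-2} - 2^{m-1} when f̂(x) = 1; if wt(f) = 2^{2m-1} + 2^{m-1}, N(x) = 2^{2m-2} + 2^{m-1} when f̂(x) = 0 and N(x) = 2^{2m-2} when f̂(x) = 1. Hence C(f) is a two-weight code with nonzero codeword weights {2^{2m-2}, 2^{2m-2} - 2^{m-1}} in the first case and {2^{2m-2}, 2^{2m-2} + 2^{m-1}} in the second. -/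
open Finset

/-- The weight of the codeword of `C(f)` corresponding to `x`:
`|{y | f y = 1 ∧ ⟨x,y⟩ = 1}|`. -/
def codewordWeight {m : ℕ} (f : (Fin (2 * m) → ZMod 2) → ZMod 2)
    (x : Fin (2 * m) → ZMod 2) : ℕ :=
  (Finset.univ.filter fun y => f y = 1 ∧ dotp x y = 1).card

/-!
Reading Boolean values in `{0, 1}`, `(-1)^(a+b) = 1 - 2a - 2b + 4ab`; summing over `y`
with `a = f y`, `b = ⟨x,y⟩` gives `W_f(x) = 2^(2m) - 2 wt(f) - 2 wt(⟨x,·⟩) + 4 N(x)`.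
For `x ≠ 0` the linear form `⟨x,·⟩` is balanced, so `W_f(x) = 4 N(x) - 2 wt(f)`.
Bentness makes `W_f(x) = ±2^m` with the sign given by `f̂(x)`, and each case of the
theorem is `N(x) = (W_f(x) + 2 wt(f)) / 4`.
-/

theorem neg_one_pow_val_add_zmod_two (a b : ZMod 2) :
    (-1 : ℤ) ^ (a + b).val = 1 - 2 * (if a = 1 then 1 else 0) - 2 * (if b = 1 then 1 else 0)
      + 4 * (if a * b = 1 then 1 else 0) := by
  revert a b; decide

theorem walsh_eq {n : ℕ} (f : (Fin n → ZMod 2) → ZMod 2) (x : Fin n → ZMod 2) :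
    walsh f x = 2 ^ n - 2 * wt f - 2 * wt (dotp x) + 4 * wt (fun y => f y * dotp x y) := by
  simp only [walsh, neg_one_pow_val_add_zmod_two, sum_add_distrib, sum_sub_distrib, ← mul_sum,
    sum_boole, sum_const, card_univ, Fintype.card_fun, ZMod.card, Fintype.card_fin, wt]
  simp

def dotpAddHom {n : ℕ} (x : Fin n → ZMod 2) : (Fin n → ZMod 2) →+ ZMod 2 :=
  AddMonoidHom.mk' (dotp x) fun y z => by simp only [dotp, Pi.add_apply, mul_add, sum_add_distrib]

theorem eq_one_of_ne_zero_zmod_two {a : ZMod 2} (ha : a ≠ 0) : a = 1 := by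
  revert a; decide

theorem two_mul_wt_dotp_of_ne_zero {n : ℕ} {x : Fin n → ZMod 2} (hx : x ≠ 0) :
    2 * wt (dotp x) = 2 ^ n := by
  obtain ⟨i, hi⟩ := Function.ne_iff.mp hx
  have hone : (1 : ZMod 2) ∈ Set.range (dotpAddHom x) :=
    ⟨Pi.single i 1, show dotp x _ = 1 by
      simpa [dotp, Pi.single_apply] using eq_one_of_ne_zero_zmod_two hi⟩
  have hzero : (0 : ZMod 2) ∈ Set.range (dotpAddHom x) := ⟨0, map_zero _⟩
  have hfib := AddMonoidHom.card_fiber_eq_of_mem_range (dotpAddHom x) hone hzero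
  have hsplit := card_filter_add_card_filter_not (s := univ) fun y => dotp x y = 1
  have hne : ∀ a : ZMod 2, ¬a = 1 ↔ a = 0 := by decide
  simp only [hne, card_univ, Fintype.card_fun, ZMod.card, Fintype.card_fin] at hsplit
  change #{y | dotp x y = 1} = #{y | dotp x y = 0} at hfib
  rw [wt]
  omega

theorem codewordWeight_eq_wt {m : ℕ} (f : (Fin (2 * m) → ZMod 2) → ZMod 2)
    (x : Fin (2 * m) → ZMod 2) : codewordWeight f x = wt (fun y => f y * dotp x y) := by
  have h : ∀ a b : ZMod 2, a * b = 1 ↔ a = 1 ∧ b = 1 := by decide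
  simp only [codewordWeight, wt, h]

theorem walsh_eq_four_mul_codewordWeight_sub {m : ℕ} (f : (Fin (2 * m) → ZMod 2) → ZMod 2)
    {x : Fin (2 * m) → ZMod 2} (hx : x ≠ 0) :
    walsh f x = 4 * codewordWeight f x - 2 * wt f := by
  have := two_mul_wt_dotp_of_ne_zero hx
  rw [walsh_eq, codewordWeight_eq_wt]
  have : (2 : ℤ) * wt (dotp x) = 2 ^ (2 * m) := by exact_mod_cast this
  linarith

section Dual

variable {m : ℕ} {f : (Fin (2 * m) → ZMod 2) → ZMod 2} {x : Fin (2 * m) → ZMod 2}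

theorem dual_eq_zero_or_eq_one : dual f x = 0 ∨ dual f x = 1 := by
  unfold dual; split_ifs <;> simp

theorem walsh_eq_of_dual_eq_zero (h : dual f x = 0) : walsh f x = 2 ^ m := by
  by_contra hne
  simp [dual, hne] at h

theorem walsh_eq_of_dual_eq_one (hf : IsBent f) (h : dual f x = 1) : walsh f x = -2 ^ m :=
  ((abs_eq (by positivity)).mp (hf x)).resolve_left fun hW => by simp [dual, hW] at h

end Dual

theorem bent_code_two_weight_general {m : ℕ}
    (f : (Fin (2 * m) → ZMod 2) → ZMod 2) (hf : IsBent f)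
    (x : Fin (2 * m) → ZMod 2) (hx : x ≠ 0) :
    (wt f = 2 ^ (2 * m - 1) - 2 ^ (m - 1) →
      (dual f x = 0 → codewordWeight f x = 2 ^ (2 * m - 2)) ∧
      (dual f x = 1 → codewordWeight f x = 2 ^ (2 * m - 2) - 2 ^ (m - 1)) ∧
      (codewordWeight f x = 2 ^ (2 * m - 2) ∨
        codewordWeight f x = 2 ^ (2 * m - 2) - 2 ^ (m - 1))) ∧
    (wt f = 2 ^ (2 * m - 1) + 2 ^ (m - 1) →
      (dual f x = 0 → codewordWeight f x = 2 ^ (2 * m - 2) + 2 ^ (m - 1)) ∧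
      (dual f x = 1 → codewordWeight f x = 2 ^ (2 * m - 2)) ∧
      (codewordWeight f x = 2 ^ (2 * m - 2) ∨
        codewordWeight f x = 2 ^ (2 * m - 2) + 2 ^ (m - 1))) := by
  obtain ⟨k, rfl⟩ : ∃ k, m = k + 1 := by
    rcases m with _ | k
    · exact absurd (funext fun i => absurd i.2 (by simp)) hx
    · exact ⟨k, rfl⟩
  have hW := walsh_eq_four_mul_codewordWeight_sub f hx
  have h0 : dual f x = 0 → 4 * (codewordWeight f x : ℤ) = 2 * wt f + 2 * (2 ^ k : ℕ) :=
    fun hd => by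
      push_cast
      linarith [walsh_eq_of_dual_eq_zero hd, pow_succ (2 : ℤ) k]
  have h1 : dual f x = 1 → 4 * (codewordWeight f x : ℤ) + 2 * (2 ^ k : ℕ) = 2 * wt f :=
    fun hd => by
      push_cast
      linarith [walsh_eq_of_dual_eq_one hf hd, pow_succ (2 : ℤ) k]
  have hd := dual_eq_zero_or_eq_one (f := f) (x := x)
  rw [show 2 * (k + 1) - 1 = k + k + 1 by omega, show 2 * (k + 1) - 2 = k + k by omega,
    Nat.add_sub_cancel, pow_succ, pow_add]
  -- in terms of `a = 2^k` and `b = 4^k` everything is linear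
  have ha : 2 ^ k ≤ 2 ^ k * 2 ^ k := Nat.le_mul_self _
  generalize 2 ^ k = a at *
  generalize a * a = b at *
  rcases hd with hd | hd <;>
    simp only [hd, forall_const, zero_ne_one, one_ne_zero, IsEmpty.forall_iff, true_and]
      at h0 h1 ⊢ <;>
    omega

/-- the weights of nonzero codewords of the linear code of a bent function. -/
theorem bent_code_two_weight {m : ℕ} (hm : 1 ≤ m)
    (f : (Fin (2 * m) → ZMod 2) → ZMod 2) (hf : IsBent f)
    (x : Fin (2 * m) → ZMod 2) (hx : x ≠ 0) :
    (wt f = 2 ^ (2 * m - 1) - 2 ^ (m - 1) →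
      (dual f x = 0 → codewordWeight f x = 2 ^ (2 * m - 2)) ∧
      (dual f x = 1 → codewordWeight f x = 2 ^ (2 * m - 2) - 2 ^ (m - 1)) ∧
      (codewordWeight f x = 2 ^ (2 * m - 2) ∨
        codewordWeight f x = 2 ^ (2 * m - 2) - 2 ^ (m - 1))) ∧
    (wt f = 2 ^ (2 * m - 1) + 2 ^ (m - 1) →
      (dual f x = 0 → codewordWeight f x = 2 ^ (2 * m - 2) + 2 ^ (m - 1)) ∧
      (dual f x = 1 → codewordWeight f x = 2 ^ (2 * m - 2)) ∧
      (codewordWeight f x = 2 ^ (2 * m - 2) ∨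
        codewordWeight f x = 2 ^ (2 * m - 2) + 2 ^ (m - 1))) :=
  bent_code_two_weight_general f hf x hx
end

section
/- Let m ≥ 1 and let q : F_2^{2m} → F_2 be the quadratic function q(x) = ∑_{k<m} x_k x_{m+k}. Then for every c ∈ F_2^{2m} with q(c) = 0 there exists an invertible F_2-linear map A on F_2^{2m} such that q(A x) = q(x) + ⟨c, x⟩ for all x ∈ F_2^{2m}. -/
open Finset

/-- The standard quadratic bent function `q x = ∑_{k<m} x_k x_{m+k}` on `F_2^(2m)`. -/
def quadq {m : ℕ} (x : Fin (2 * m) → ZMod 2) : ZMod 2 :=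
  ∑ k : Fin m, x ⟨k.1, by have := k.isLt; omega⟩ * x ⟨m + k.1, by have := k.isLt; omega⟩

/-!
`q` is the quadratic form of the bilinear form `B x y = ∑_k x_k y_{m+k}`, so
`polar q x (J c) = ⟨c, x⟩`, where `J` swaps the two halves of the coordinates, and
`q (J c) = q c = 0`. For any quadratic form `Q`, vector `v` with `Q v = 0` and `f = polar Q · v`,
the transvection `x ↦ x + f x • v` is invertible because `f v = 2 Q v = 0`, and
`Q (x + f x • v) = Q x + (f x)^2`. Over `F_2`, `t^2 = t`.
-/

open Module QuadraticMap

theorem QuadraticMap.exists_linearEquiv_map_eq_add_sq {R M : Type*} [CommRing R] [AddCommGroup M]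
    [Module R M] (Q : QuadraticMap R M R) (f : Dual R M) (v : M) (hf : ∀ x, polar Q x v = f x)
    (hv : Q v = 0) : ∃ A : M ≃ₗ[R] M, ∀ x, Q (A x) = Q x + f x ^ 2 := by
  have hfv : f v = 0 := by rw [← hf, polar_self, hv, smul_zero]
  refine ⟨LinearEquiv.transvection hfv, fun x => ?_⟩
  rw [LinearEquiv.transvection.apply, QuadraticMap.map_add Q, QuadraticMap.map_smul,
    polar_smul_right, hf, hv, smul_eq_mul, smul_eq_mul]
  ring

section Hyperbolic

variable {R : Type*} [CommRing R] {m : ℕ}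

def lowIndex (k : Fin m) : Fin (2 * m) := ⟨k, by omega⟩

def highIndex (k : Fin m) : Fin (2 * m) := ⟨m + k, by omega⟩

theorem Fin.sum_univ_two_mul {β : Type*} [AddCommMonoid β] (f : Fin (2 * m) → β) :
    ∑ i, f i = ∑ k : Fin m, (f (lowIndex k) + f (highIndex k)) := by
  rw [← (finCongr (two_mul m)).symm.sum_comp, Fin.sum_univ_add, ← Finset.sum_add_distrib]
  rfl

def swapHalves {α : Type*} (c : Fin (2 * m) → α) : Fin (2 * m) → α := fun i =>
  if h : (i : ℕ) < m then c ⟨m + i, by omega⟩ else c ⟨i - m, by omega⟩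

@[simp]
theorem swapHalves_lowIndex {α : Type*} (c : Fin (2 * m) → α) (k : Fin m) :
    swapHalves c (lowIndex k) = c (highIndex k) :=
  dif_pos k.isLt

@[simp]
theorem swapHalves_highIndex {α : Type*} (c : Fin (2 * m) → α) (k : Fin m) :
    swapHalves c (highIndex k) = c (lowIndex k) := by
  simp [swapHalves, lowIndex, highIndex]

variable (R m) in
def hyperbolicQuadraticMap : QuadraticMap R (Fin (2 * m) → R) R :=
  LinearMap.BilinMap.toQuadraticMap <| (dotProductBilin R R).compl₁₂
    (LinearMap.funLeft R R lowIndex) (LinearMap.funLeft R R highIndex)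

theorem hyperbolicQuadraticMap_apply (x : Fin (2 * m) → R) :
    hyperbolicQuadraticMap R m x = ∑ k, x (lowIndex k) * x (highIndex k) :=
  rfl

theorem polar_hyperbolicQuadraticMap_swapHalves (c x : Fin (2 * m) → R) :
    polar (hyperbolicQuadraticMap R m) x (swapHalves c) = c ⬝ᵥ x := by
  rw [hyperbolicQuadraticMap, LinearMap.BilinMap.polar_toQuadraticMap, dotProduct,
    Fin.sum_univ_two_mul]
  simp [dotProduct, Finset.sum_add_distrib, mul_comm]

theorem hyperbolicQuadraticMap_swapHalves (c : Fin (2 * m) → R) :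
    hyperbolicQuadraticMap R m (swapHalves c) = hyperbolicQuadraticMap R m c := by
  simp [hyperbolicQuadraticMap_apply, mul_comm]

end Hyperbolic

theorem quadq_eq_hyperbolicQuadraticMap {m : ℕ} (x : Fin (2 * m) → ZMod 2) :
    quadq x = hyperbolicQuadraticMap (ZMod 2) m x :=
  rfl

theorem quadratic_linear_equiv_of_qc_zero_general {m : ℕ}
    (c : Fin (2 * m) → ZMod 2) (hc : quadq c = 0) :
    ∃ A : (Fin (2 * m) → ZMod 2) ≃ₗ[ZMod 2] (Fin (2 * m) → ZMod 2),
      ∀ x, quadq (A x) = quadq x + dotp c x := by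
  obtain ⟨A, hA⟩ := (hyperbolicQuadraticMap (ZMod 2) m).exists_linearEquiv_map_eq_add_sq
    (dotProductBilin (ZMod 2) (ZMod 2) c) (swapHalves c)
    (polar_hyperbolicQuadraticMap_swapHalves c)
    (by rw [hyperbolicQuadraticMap_swapHalves, ← quadq_eq_hyperbolicQuadraticMap, hc])
  refine ⟨A, fun x => ?_⟩
  rw [quadq_eq_hyperbolicQuadraticMap, quadq_eq_hyperbolicQuadraticMap, hA,
    dotProductBilin_apply_apply, ZMod.pow_card]
  rfl

/-- for `c` with `q c = 0` there is an invertible linear map `A` with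
`q (A x) = q x + ⟨c, x⟩` for all `x`. -/
theorem quadratic_linear_equiv_of_qc_zero {m : ℕ} (hm : 1 ≤ m)
    (c : Fin (2 * m) → ZMod 2) (hc : quadq c = 0) :
    ∃ A : (Fin (2 * m) → ZMod 2) ≃ₗ[ZMod 2] (Fin (2 * m) → ZMod 2),
      ∀ x, quadq (A x) = quadq x + dotp c x :=
  quadratic_linear_equiv_of_qc_zero_general c hc
end

section
/- Let m ≥ 1, let q : F_2^{2m} → F_2 be the quadratic function q(x) = ∑_{k<m} x_k x_{m+k}, and let e⁽⁰⁾ ∈ F_2^{2m} be the vector with e⁽⁰⁾_i = 1 iff i = 0 or i = m. Then for every c' ∈ F_2^{2m} with q(c') = 1 there exists an invertible F_2-linear map B on F_2^{2m} such that q(B x) + ⟨e⁽⁰⁾, B x⟩ = q(x) + ⟨c', x⟩ for all x ∈ F_2^{2m}. -/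
/-!
Splitting `x ∈ F₂^{2m}` into halves `(x₁, x₂)`, `q x = x₁ ⬝ᵥ x₂` is the hyperbolic form, and
polarization gives `q x + ⟨c, x⟩ = q (x + c̃) - q c`, where `c̃` swaps the halves of `c`.
So it suffices to find an isometry of the hyperbolic form sending `c̃'` to `ẽ⁽⁰⁾`, two vectors of
value `1`. Over any field the isometries `(u, v) ↦ (g u, g⁻ᵀ v)` together with the shears
`(u, v) ↦ (u, v + S u)`, `S` alternating, act transitively on the vectors of a given nonzero value.
-/

open Finset

open Matrix

theorem exists_linearEquiv_apply_eq {K V : Type*} [Field K] [AddCommGroup V] [Module K V]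
    {v w : V} (hv : v ≠ 0) (hw : w ≠ 0) : ∃ g : V ≃ₗ[K] V, g v = w := by
  obtain ⟨g, hg⟩ := Submodule.exists_linearEquiv_restrict_eq
    ((LinearEquiv.toSpanNonzeroSingleton K V v hv).symm ≪≫ₗ
      LinearEquiv.toSpanNonzeroSingleton K V w hw)
  have hv1 : (LinearEquiv.toSpanNonzeroSingleton K V v hv).symm
      ⟨v, Submodule.mem_span_singleton_self v⟩ = 1 := by
    rw [LinearEquiv.symm_apply_eq, LinearEquiv.toSpanNonzeroSingleton_one]
  refine ⟨g, ?_⟩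
  simpa [hv1] using (hg ⟨v, Submodule.mem_span_singleton_self v⟩).symm

section DotProduct

variable {R ι : Type*} [Fintype ι] [DecidableEq ι]

def contragredient [CommSemiring R] (g : (ι → R) ≃ₗ[R] (ι → R)) : (ι → R) ≃ₗ[R] (ι → R) :=
  dotProductEquiv R ι ≪≫ₗ g.symm.dualMap ≪≫ₗ (dotProductEquiv R ι).symm

theorem apply_dotProduct_contragredient [CommSemiring R] (g : (ι → R) ≃ₗ[R] (ι → R))
    (u v : ι → R) : g u ⬝ᵥ contragredient g v = u ⬝ᵥ v := by
  rw [dotProduct_comm]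
  simp only [contragredient, LinearEquiv.trans_apply]
  rw [← dotProductEquiv_apply_apply, LinearEquiv.apply_symm_apply]
  simp [dotProduct_comm v]

def wedge [CommRing R] (y t : ι → R) : (ι → R) →ₗ[R] (ι → R) :=
  (dotProductEquiv R ι y).smulRight t - (dotProductEquiv R ι t).smulRight y

theorem wedge_apply [CommRing R] (y t u : ι → R) :
    wedge y t u = (y ⬝ᵥ u) • t - (t ⬝ᵥ u) • y := by
  simp [wedge]

theorem dotProduct_wedge_self [CommRing R] (y t u : ι → R) : u ⬝ᵥ wedge y t u = 0 := by
  simp [wedge_apply, dotProduct_comm u, mul_comm]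

end DotProduct

section HyperbolicForm

variable {R ι : Type*} [Fintype ι]

def hyperbolicForm [CommSemiring R] (p : (ι → R) × (ι → R)) : R := p.1 ⬝ᵥ p.2

theorem hyperbolicForm_add [CommSemiring R] (p r : (ι → R) × (ι → R)) :
    hyperbolicForm (p + r) =
      hyperbolicForm p + hyperbolicForm r + (p.1 ⬝ᵥ r.2 + r.1 ⬝ᵥ p.2) := by
  simp only [hyperbolicForm, Prod.fst_add, Prod.snd_add, add_dotProduct, dotProduct_add]
  ring

theorem hyperbolicForm_swap [CommSemiring R] (p : (ι → R) × (ι → R)) :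
    hyperbolicForm p.swap = hyperbolicForm p :=
  dotProduct_comm _ _

theorem hyperbolicForm_skewProd [CommRing R] (S : (ι → R) →ₗ[R] (ι → R))
    (hS : ∀ u, u ⬝ᵥ S u = 0) (p : (ι → R) × (ι → R)) :
    hyperbolicForm ((LinearEquiv.refl R _).skewProd (LinearEquiv.refl R _) S p) =
      hyperbolicForm p := by
  simp [hyperbolicForm, LinearEquiv.skewProd_apply, dotProduct_add, hS]

variable [DecidableEq ι]

theorem hyperbolicForm_prodCongr_contragredient [CommSemiring R] (g : (ι → R) ≃ₗ[R] (ι → R))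
    (p : (ι → R) × (ι → R)) :
    hyperbolicForm (g.prodCongr (contragredient g) p) = hyperbolicForm p :=
  apply_dotProduct_contragredient g p.1 p.2

theorem exists_hyperbolicForm_isometry_apply_eq {K : Type*} [Field K]
    {a x : (ι → K) × (ι → K)} (h : hyperbolicForm a = hyperbolicForm x)
    (ha : hyperbolicForm a ≠ 0) :
    ∃ T : ((ι → K) × (ι → K)) ≃ₗ[K] (ι → K) × (ι → K),
      (∀ p, hyperbolicForm (T p) = hyperbolicForm p) ∧ T a = x := by
  have ha1 : a.1 ≠ 0 := by rintro h0; simp [hyperbolicForm, h0] at ha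
  have hx1 : x.1 ≠ 0 := by rintro h0; rw [h] at ha; simp [hyperbolicForm, h0] at ha
  -- Move `a.1` to `x.1` by `(g, g⁻ᵀ)`, then fix the second component by a shear.
  obtain ⟨g, hg⟩ := exists_linearEquiv_apply_eq (K := K) ha1 hx1
  set c := hyperbolicForm a
  set b := contragredient g a.2
  have hb : x.1 ⬝ᵥ b = c := by rw [← hg]; exact apply_dotProduct_contragredient g a.1 a.2
  set t := x.2 - b
  have hS : c⁻¹ • wedge x.2 t x.1 = t := by
    have : t ⬝ᵥ x.1 = 0 := by
      rw [dotProduct_comm, dotProduct_sub, hb]; exact sub_eq_zero.2 h.symm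
    rw [wedge_apply, this, zero_smul, sub_zero, dotProduct_comm]
    change c⁻¹ • hyperbolicForm x • t = t
    rw [← h]
    exact inv_smul_smul₀ ha t
  refine ⟨(g.prodCongr (contragredient g)).trans
      ((LinearEquiv.refl K _).skewProd (LinearEquiv.refl K _) (c⁻¹ • wedge x.2 t)), ?_, ?_⟩
  · intro p
    rw [LinearEquiv.trans_apply, hyperbolicForm_skewProd, hyperbolicForm_prodCongr_contragredient]
    intro u
    simp [dotProduct_smul, dotProduct_wedge_self]
  · ext1
    · simp [hg]
    · simp [LinearEquiv.skewProd_apply, hg, hS, b, t]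

end HyperbolicForm

def splitEquiv (R : Type*) [Semiring R] (m : ℕ) :
    (Fin (2 * m) → R) ≃ₗ[R] (Fin m → R) × (Fin m → R) :=
  LinearEquiv.funCongrLeft R R (finSumFinEquiv.trans (finCongr (two_mul m).symm)) ≪≫ₗ
    LinearEquiv.sumArrowLequivProdArrow (Fin m) (Fin m) R R

theorem dotProduct_eq_splitEquiv {R : Type*} [CommSemiring R] {m : ℕ} (x y : Fin (2 * m) → R) :
    x ⬝ᵥ y = (splitEquiv R m x).1 ⬝ᵥ (splitEquiv R m y).1 +
      (splitEquiv R m x).2 ⬝ᵥ (splitEquiv R m y).2 := by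
  rw [← sumElim_dotProduct_sumElim,
    ← comp_equiv_dotProduct_comp_equiv _ _ (finSumFinEquiv.trans (finCongr (two_mul m).symm))]
  congr 1 <;> ext (i | i) <;> rfl

theorem quadq_eq_hyperbolicForm {m : ℕ} (x : Fin (2 * m) → ZMod 2) :
    quadq x = hyperbolicForm (splitEquiv (ZMod 2) m x) :=
  rfl

theorem quadq_add_dotp {m : ℕ} (c x : Fin (2 * m) → ZMod 2) :
    quadq x + dotp c x =
      hyperbolicForm (splitEquiv (ZMod 2) m x + (splitEquiv (ZMod 2) m c).swap) - quadq c := by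
  rw [hyperbolicForm_add, hyperbolicForm_swap, quadq_eq_hyperbolicForm, quadq_eq_hyperbolicForm,
    dotp, ← dotProduct, dotProduct_eq_splitEquiv]
  simp only [Prod.fst_swap, Prod.snd_swap]
  rw [dotProduct_comm (splitEquiv _ m x).1]
  ring

/-- with `e⁽⁰⁾` the vector supported at coordinates `0` and `m`, for every
`c'` with `q c' = 1` there is an invertible linear map `B` with
`q (B x) + ⟨e⁽⁰⁾, B x⟩ = q x + ⟨c', x⟩` for all `x`. -/
theorem quadratic_linear_equiv_of_qc_one {m : ℕ} (hm : 1 ≤ m)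
    (c' : Fin (2 * m) → ZMod 2) (hc' : quadq c' = 1) :
    ∃ B : (Fin (2 * m) → ZMod 2) ≃ₗ[ZMod 2] (Fin (2 * m) → ZMod 2),
      ∀ x, quadq (B x) +
          dotp (fun i : Fin (2 * m) => if i.1 = 0 ∨ i.1 = m then 1 else 0) (B x) =
        quadq x + dotp c' x := by
  set e := fun i : Fin (2 * m) => if i.1 = 0 ∨ i.1 = m then (1 : ZMod 2) else 0
  have he : quadq e = 1 := by
    rw [quadq, Finset.sum_eq_single ⟨0, hm⟩]
    · simp [e]
    · intro k _ hk
      have : k.1 ≠ 0 := fun h => hk (Fin.ext h)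
      simp [e, this]
    · simp
  set σ := splitEquiv (ZMod 2) m
  obtain ⟨T, hT, hTc⟩ := exists_hyperbolicForm_isometry_apply_eq
    (a := (σ c').swap) (x := (σ e).swap)
    (by rw [hyperbolicForm_swap, hyperbolicForm_swap, ← quadq_eq_hyperbolicForm,
      ← quadq_eq_hyperbolicForm, hc', he])
    (by rw [hyperbolicForm_swap, ← quadq_eq_hyperbolicForm, hc']; exact one_ne_zero)
  refine ⟨σ ≪≫ₗ T ≪≫ₗ σ.symm, fun x => ?_⟩
  rw [quadq_add_dotp, quadq_add_dotp, hc', he, ← hTc]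
  simp [σ, ← map_add, hT]
end

section
/- Let m ≥ 1 and let q : F_2^{2m} → F_2 be the quadratic function q(x) = ∑_{k<m} x_k x_{m+k}. Then for all c, c' ∈ F_2^{2m} with q(c) = q(c') = 1 there exists an invertible F_2-linear map A on F_2^{2m} such that q(A x) + ⟨c, A x⟩ = q(x) + ⟨c', x⟩ for all x ∈ F_2^{2m}. -/
open Finset

/-!
Polarising, `q x + ⟨c, x⟩ = q (x + c*) + q c`, where `c*` is `c` with its two halves swapped, so
it suffices to find an isometry of `q` sending `c'*` to `c*`. Writing `F₂^{2m} = V^* × V`, `q`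
becomes the hyperbolic form `(f, x) ↦ f x`, whose isometries act transitively on the vectors of
any given nonzero value: an automorphism of `V` moves the second component, and a shear
`(f, x) ↦ (f + S x, x)` by an alternating form `S` then adjusts the first.
-/

open Module QuadraticMap QuadraticForm

theorem exists_linearEquiv_apply_eq_s15 {K V : Type*} [DivisionRing K] [AddCommGroup V] [Module K V]
    {x y : V} (hx : x ≠ 0) (hy : y ≠ 0) : ∃ g : V ≃ₗ[K] V, g x = y := by
  obtain ⟨g, hg⟩ := Submodule.exists_linearEquiv_restrict_eq
    ((LinearEquiv.toSpanNonzeroSingleton K V x hx).symm ≪≫ₗ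
      LinearEquiv.toSpanNonzeroSingleton K V y hy)
  have hgx := hg ⟨x, Submodule.mem_span_singleton_self x⟩
  rw [LinearEquiv.trans_apply, ← LinearEquiv.coord, LinearEquiv.coord_self,
    LinearEquiv.toSpanNonzeroSingleton_one] at hgx
  exact ⟨g, hgx.symm⟩

theorem LinearMap.BilinForm.exists_isAlt_apply_eq {K V : Type*} [Field K] [AddCommGroup V]
    [Module K V] {y : V} {u : Dual K V} (hy : y ≠ 0) (hu : u y = 0) :
    ∃ S : LinearMap.BilinForm K V, S.IsAlt ∧ S y = u := by
  obtain ⟨φ, hφ⟩ := Projective.exists_dual_eq_one K hy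
  refine ⟨φ.smulRight u - u.smulRight φ, fun z => ?_, ?_⟩
  · simp [mul_comm]
  · ext z
    simp [hφ, hu]

theorem QuadraticMap.IsometryEquiv.map_add_polar_of_apply_eq {R M N : Type*} [CommRing R]
    [AddCommGroup M] [AddCommGroup N] [Module R M] [Module R N] {Q : QuadraticMap R M N}
    (Φ : Q.IsometryEquiv Q) {v w : M} (hvw : Φ v = w) (p : M) :
    Q (Φ p) + polar Q w (Φ p) = Q p + polar Q v p := by
  subst hvw
  simp only [polar, ← map_add, Φ.map_app]

namespace QuadraticForm

section CommRing

variable {R M : Type*} [CommRing R] [AddCommGroup M] [Module R M]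

theorem polar_dualProd (p q : Dual R M × M) :
    polar (dualProd R M) p q = p.1 q.2 + q.1 p.2 := by
  simp only [polar, dualProd_apply, Prod.fst_add, Prod.snd_add, map_add, LinearMap.add_apply]
  abel

def dualProdShear (S : LinearMap.BilinForm R M) (hS : S.IsAlt) :
    (dualProd R M).IsometryEquiv (dualProd R M) where
  toLinearEquiv := LinearEquiv.prodComm R _ _ ≪≫ₗ
    (LinearEquiv.refl R M).skewProd (LinearEquiv.refl R (Dual R M)) S ≪≫ₗ
      LinearEquiv.prodComm R _ _
  map_app' p := by simp [hS.self_eq_zero]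

theorem dualProdShear_apply (S : LinearMap.BilinForm R M) (hS : S.IsAlt) (p : Dual R M × M) :
    dualProdShear S hS p = (p.1 + S p.2, p.2) :=
  rfl

end CommRing

theorem exists_isometryEquiv_dualProd_apply_eq {K V : Type*} [Field K] [AddCommGroup V]
    [Module K V] {v w : Dual K V × V} (hvw : dualProd K V v = dualProd K V w)
    (hv : dualProd K V v ≠ 0) :
    ∃ Φ : (dualProd K V).IsometryEquiv (dualProd K V), Φ v = w := by
  obtain ⟨f, x⟩ := v
  obtain ⟨g, y⟩ := w
  simp only [dualProd_apply] at hvw hv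
  have hx : x ≠ 0 := by rintro rfl; simp at hv
  have hy : y ≠ 0 := by rintro rfl; simp [hvw] at hv
  obtain ⟨M, hMx⟩ := exists_linearEquiv_apply_eq_s15 (K := K) hx hy
  set f' := M.dualMap.symm f
  have hMfx : dualProdIsometry M (f, x) = (f', y) := by rw [← hMx]; rfl
  have hf'y : f' y = g y := by simp [f', ← hMx, hvw]
  obtain ⟨S, hS, hSy⟩ := LinearMap.BilinForm.exists_isAlt_apply_eq hy (u := g - f')
    (by simp [hf'y])
  refine ⟨(dualProdIsometry M).trans (dualProdShear S hS), ?_⟩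
  show dualProdShear S hS (dualProdIsometry M (f, x)) = (g, y)
  rw [hMfx, dualProdShear_apply, hSy, add_sub_cancel]

end QuadraticForm

def finTwoMulLinearEquiv (R : Type*) [Semiring R] (m : ℕ) :
    (Fin (2 * m) → R) ≃ₗ[R] (Fin m → R) × (Fin m → R) :=
  LinearEquiv.funCongrLeft R R (finSumFinEquiv.trans (finCongr (two_mul m).symm)) ≪≫ₗ
    LinearEquiv.sumArrowLequivProdArrow _ _ R R

/-- With `x₁, x₂` the two halves of `x`, this sends `x` to `(⟨x₁, ·⟩, x₂)`;
`dualProdEquivSwap` sends it to `(⟨x₂, ·⟩, x₁)`. -/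
def dualProdEquiv (R : Type*) [CommSemiring R] (m : ℕ) :
    (Fin (2 * m) → R) ≃ₗ[R] Dual R (Fin m → R) × (Fin m → R) :=
  finTwoMulLinearEquiv R m ≪≫ₗ (dotProductEquiv R (Fin m)).prodCongr (LinearEquiv.refl R _)

def dualProdEquivSwap (R : Type*) [CommSemiring R] (m : ℕ) :
    (Fin (2 * m) → R) ≃ₗ[R] Dual R (Fin m → R) × (Fin m → R) :=
  finTwoMulLinearEquiv R m ≪≫ₗ LinearEquiv.prodComm R _ _ ≪≫ₗ
    (dotProductEquiv R (Fin m)).prodCongr (LinearEquiv.refl R _)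

section quadq

variable {m : ℕ}

theorem quadq_eq_dualProd (x : Fin (2 * m) → ZMod 2) :
    quadq x = dualProd (ZMod 2) _ (dualProdEquiv (ZMod 2) m x) :=
  rfl

theorem quadq_eq_dualProd_swap (x : Fin (2 * m) → ZMod 2) :
    quadq x = dualProd (ZMod 2) _ (dualProdEquivSwap (ZMod 2) m x) :=
  dotProduct_comm _ _

theorem dotp_eq_polar_dualProd (c x : Fin (2 * m) → ZMod 2) :
    dotp c x = polar (dualProd (ZMod 2) _) (dualProdEquivSwap (ZMod 2) m c)
      (dualProdEquiv (ZMod 2) m x) := by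
  rw [dotp, ← Equiv.sum_comp (finSumFinEquiv.trans (finCongr (two_mul m).symm)),
    Fintype.sum_sum_type, polar_dualProd, add_comm]
  exact congrArg₂ (· + ·) rfl (dotProduct_comm _ _)

end quadq

theorem quadratic_linear_equiv_of_qc_qc'_one_general {m : ℕ}
    (c c' : Fin (2 * m) → ZMod 2) (hc : quadq c = 1) (hc' : quadq c' = 1) :
    ∃ A : (Fin (2 * m) → ZMod 2) ≃ₗ[ZMod 2] (Fin (2 * m) → ZMod 2),
      ∀ x, quadq (A x) + dotp c (A x) = quadq x + dotp c' x := by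
  set e := dualProdEquiv (ZMod 2) m
  obtain ⟨Φ, hΦ⟩ := exists_isometryEquiv_dualProd_apply_eq
    (v := dualProdEquivSwap (ZMod 2) m c') (w := dualProdEquivSwap (ZMod 2) m c)
    (by rw [← quadq_eq_dualProd_swap, ← quadq_eq_dualProd_swap, hc, hc'])
    (by rw [← quadq_eq_dualProd_swap, hc']; exact one_ne_zero)
  refine ⟨e ≪≫ₗ Φ.toLinearEquiv ≪≫ₗ e.symm, fun x => ?_⟩
  have hAx : e ((e ≪≫ₗ Φ.toLinearEquiv ≪≫ₗ e.symm) x) = Φ (e x) :=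
    e.apply_symm_apply _
  rw [quadq_eq_dualProd, quadq_eq_dualProd, dotp_eq_polar_dualProd, dotp_eq_polar_dualProd, hAx]
  exact Φ.map_add_polar_of_apply_eq hΦ (e x)

/-- for `c`, `c'` with `q c = q c' = 1` there is an invertible linear map `A`
with `q (A x) + ⟨c, A x⟩ = q x + ⟨c', x⟩` for all `x`. -/
theorem quadratic_linear_equiv_of_qc_qc'_one {m : ℕ} (hm : 1 ≤ m)
    (c c' : Fin (2 * m) → ZMod 2) (hc : quadq c = 1) (hc' : quadq c' = 1) :
    ∃ A : (Fin (2 * m) → ZMod 2) ≃ₗ[ZMod 2] (Fin (2 * m) → ZMod 2),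
      ∀ x, quadq (A x) + dotp c (A x) = quadq x + dotp c' x :=
  quadratic_linear_equiv_of_qc_qc'_one_general c c' hc hc'
end
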